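/- There exists a computable functional unit for ℕ that is universal, i.e. a computable functional unit H for ℕ such that L ≤ H for every computable functional unit L for ℕ. -/

import Mathlib

/-- Primitive instructions: plain basic `f.m`, positive test `+f.m`, negative test `-f.m`
(method names are natural numbers, there is a single focus `f`), forward jump `#l`,
backward jump `\l`, and the positive/negative termination instructions `!t` / `!f`. -/
inductive Instr : Type where
  | basic (m : ℕ)
  | postest (m : ℕ)
  | negtest (m : ℕ)
  | fjump (l : ℕ)
  | bjump (l : ℕ)
  | haltT
  | haltF
deriving DecidableEq

/-- A functional unit for a state space `S`: a finite, functional set of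
(method name, method operation) pairs, where a method operation is a total
function `S → Bool × S`. -/
structure FU (S : Type*) where
  carrier : Set (ℕ × (S → Bool × S))
  finite : carrier.Finite
  functional : ∀ {m : ℕ} {M M' : S → Bool × S},
    (m, M) ∈ carrier → (m, M') ∈ carrier → M = M'

/-- The interface of a functional unit: the set of method names occurring in it. -/
def FU.iface {S : Type*} (H : FU S) : Set ℕ := {m | ∃ M, (m, M) ∈ H.carrier}

/-- The method operation named `m` in `H` (an arbitrary fixed value if `m ∉ I(H)`). -/
noncomputable def FU.op {S : Type*} (H : FU S) (m : ℕ) (s : S) : Bool × S :=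
  letI := Classical.propDecidable
  if h : ∃ M, (m, M) ∈ H.carrier then h.choose s else (true, s)

/-- The restriction `⟨I, H⟩` of a functional unit to a set `I` of method names. -/
def FU.restrict {S : Type*} (H : FU S) (I : Set ℕ) : FU S where
  carrier := {p ∈ H.carrier | p.1 ∈ I}
  finite := H.finite.subset (Set.sep_subset _ _)
  functional := fun hM hM' => H.functional hM.1 hM'.1

/-- The method names used by an instruction all belong to `I`. -/
def Instr.namesIn (I : Set ℕ) : Instr → Prop
  | .basic m => m ∈ I
  | .postest m => m ∈ I
  | .negtest m => m ∈ I
  | _ => True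

/-- An instruction sequence over a set `I` of method names: a finite nonempty list of
primitive instructions whose method names belong to `I`. -/
def InstrSeqOver (I : Set ℕ) (x : List Instr) : Prop :=
  x ≠ [] ∧ ∀ u ∈ x, u.namesIn I

/-- `Exec H x i s b s'` : execution of the instruction sequence `x` on the functional
unit `H`, from (0-based) position `i` in state `s`, terminates delivering the Boolean
value `b` with final state `s'`.  (Position `i` here corresponds to the 1-based
position `i+1`; positions outside the sequence, jumps `#0`/`\0`, and infinite
executions admit no derivation, i.e. execution does not terminate.) -/
inductive Exec {S : Type*} (H : FU S) (x : List Instr) : ℕ → S → Bool → S → Prop where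
  | basic {i : ℕ} {s : S} {b : Bool} {s' : S} (m : ℕ)
      (hu : x[i]? = some (Instr.basic m))
      (h : Exec H x (i + 1) (H.op m s).2 b s') : Exec H x i s b s'
  | posT {i : ℕ} {s : S} {b : Bool} {s' : S} (m : ℕ)
      (hu : x[i]? = some (Instr.postest m)) (hr : (H.op m s).1 = true)
      (h : Exec H x (i + 1) (H.op m s).2 b s') : Exec H x i s b s'
  | posF {i : ℕ} {s : S} {b : Bool} {s' : S} (m : ℕ)
      (hu : x[i]? = some (Instr.postest m)) (hr : (H.op m s).1 = false)
      (h : Exec H x (i + 2) (H.op m s).2 b s') : Exec H x i s b s'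
  | negT {i : ℕ} {s : S} {b : Bool} {s' : S} (m : ℕ)
      (hu : x[i]? = some (Instr.negtest m)) (hr : (H.op m s).1 = true)
      (h : Exec H x (i + 2) (H.op m s).2 b s') : Exec H x i s b s'
  | negF {i : ℕ} {s : S} {b : Bool} {s' : S} (m : ℕ)
      (hu : x[i]? = some (Instr.negtest m)) (hr : (H.op m s).1 = false)
      (h : Exec H x (i + 1) (H.op m s).2 b s') : Exec H x i s b s'
  | fjump {i : ℕ} {s : S} {b : Bool} {s' : S} (l : ℕ)
      (hu : x[i]? = some (Instr.fjump l))
      (h : Exec H x (i + l) s b s') : Exec H x i s b s'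
  | bjump {i : ℕ} {s : S} {b : Bool} {s' : S} (l : ℕ)
      (hu : x[i]? = some (Instr.bjump l)) (hl : l ≤ i)
      (h : Exec H x (i - l) s b s') : Exec H x i s b s'
  | haltT {i : ℕ} {s : S} (hu : x[i]? = some Instr.haltT) : Exec H x i s true s
  | haltF {i : ℕ} {s : S} (hu : x[i]? = some Instr.haltF) : Exec H x i s false s

/-- `M` is a derived method operation of `H`: there is an instruction sequence `x`
over `I(H)` whose produced partial method operation `⌈x⌉_H` is total and equals `M`. -/
def DerivedOp {S : Type*} (H : FU S) (M : S → Bool × S) : Prop :=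
  ∃ x : List Instr, InstrSeqOver H.iface x ∧ ∀ s, Exec H x 0 s (M s).1 (M s).2

/-- `H ≤ H'` : every method operation of `H` is a derived method operation of `H'`. -/
def FU.le {S : Type*} (H H' : FU S) : Prop :=
  ∀ m M, (m, M) ∈ H.carrier → DerivedOp H' M

/-- `H ≡ H'` : `H ≤ H'` and `H' ≤ H`. -/
def FU.equiv {S : Type*} (H H' : FU S) : Prop := FU.le H H' ∧ FU.le H' H

/-- A method operation on ℕ is computable if both its components are. -/
def ComputableMO (M : ℕ → Bool × ℕ) : Prop :=
  Computable (fun n => (M n).1) ∧ Computable (fun n => (M n).2)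

/-- A functional unit for ℕ is computable if all its method operations are. -/
def ComputableFU (H : FU ℕ) : Prop :=
  ∀ m M, (m, M) ∈ H.carrier → ComputableMO M


/-!
A single computable functional unit can simulate every computable method operation `M`.
Its state is a configuration `⟨e, n, t⟩`: the index `e` of a `Nat.Partrec.Code`, an input `n`
and a fuel bound `t`. The result `(M^r n, M^e n)` is encoded as one number by a total
computable function, for which some code index `e` exists. An instruction sequence loads `n`,
increments the index `e` times, then retries `evaln t e n` with fuel `t = 0, 1, 2, …`
(a backward jump forms the loop) until it halts, which it does because `M` is total, and finally
decodes the result into the Boolean reply and the new state.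
-/

open Nat.Partrec (Code)
open Nat.Partrec.Code

theorem FU.op_eq_of_mem {S : Type*} {H : FU S} {m : ℕ} {M : S → Bool × S}
    (h : (m, M) ∈ H.carrier) : H.op m = M := by
  have hex : ∃ M', (m, M') ∈ H.carrier := ⟨M, h⟩
  funext s
  rw [FU.op, dif_pos hex, H.functional hex.choose_spec h]

namespace Exec

variable {S : Type*} {H : FU S} {x : List Instr} {b : Bool} {s' : S}

theorem of_basic_run {i d m : ℕ} {states : ℕ → S}
    (hx : ∀ j < d, x[i + j]? = some (.basic m))
    (hstep : ∀ j < d, (H.op m (states j)).2 = states (j + 1))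
    (h : Exec H x (i + d) (states d) b s') : Exec H x i (states 0) b s' := by
  induction d with
  | zero => exact h
  | succ d ih =>
    refine ih (fun j hj => hx j (by omega)) (fun j hj => hstep j (by omega)) ?_
    exact .basic m (hx d (by omega)) (by rw [hstep d (by omega)]; exact h)

theorem of_negtest_loop {i m k : ℕ} {states : ℕ → S}
    (htest : x[i]? = some (.negtest m)) (hback : x[i + 1]? = some (.bjump 1))
    (hfalse : ∀ j < k, H.op m (states j) = (false, states (j + 1)))
    (htrue : (H.op m (states k)).1 = true)
    (h : Exec H x (i + 2) (H.op m (states k)).2 b s') : Exec H x i (states 0) b s' := by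
  induction k generalizing states with
  | zero => exact .negT m htest htrue h
  | succ k ih =>
    have hfirst := hfalse 0 (Nat.succ_pos k)
    refine .negF m htest (by rw [hfirst]) ?_
    rw [hfirst]
    refine .bjump 1 hback (by omega) ?_
    exact ih (states := fun j => states (j + 1)) (fun j hj => hfalse (j + 1) (by omega)) htrue h

theorem of_postest_halt {i m : ℕ} {s : S} (htest : x[i]? = some (.postest m))
    (hT : x[i + 1]? = some .haltT) (hF : x[i + 2]? = some .haltF) :
    Exec H x i s (H.op m s).1 (H.op m s).2 := by
  cases hr : (H.op m s).1
  · exact .posF m htest hr (.haltF hF)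
  · exact .posT m htest hr (.haltT hT)

end Exec

theorem ComputableMO.of_primrec {M : ℕ → Bool × ℕ} (h : Primrec M) : ComputableMO M :=
  ⟨(Primrec.fst.comp h).to_comp, (Primrec.snd.comp h).to_comp⟩

namespace Universal

/-- `true` is encoded by `0`, matching `β(0) = true`. -/
def encodeResult (p : Bool × ℕ) : ℕ := Nat.pair (cond p.1 0 1) p.2

def config (e n t : ℕ) : ℕ := Nat.pair e (Nat.pair n t)

def initOp (n : ℕ) : Bool × ℕ := (true, config 0 n 0)

def nextCodeOp (s : ℕ) : Bool × ℕ := (true, Nat.pair (s.unpair.1 + 1) s.unpair.2)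

/-- On `config e n t`: run code `e` on `n` with fuel `t`; reply `true` with its output if it
halts, and otherwise `false` with the fuel incremented. -/
def stepOp (s : ℕ) : Bool × ℕ :=
  ((evaln s.unpair.2.unpair.2 (Denumerable.ofNat Code s.unpair.1) s.unpair.2.unpair.1).isSome,
  (evaln s.unpair.2.unpair.2 (Denumerable.ofNat Code s.unpair.1) s.unpair.2.unpair.1).getD
    (config s.unpair.1 s.unpair.2.unpair.1 (s.unpair.2.unpair.2 + 1)))

def decodeResultOp (s : ℕ) : Bool × ℕ := (decide (s.unpair.1 = 0), s.unpair.2)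

theorem nextCodeOp_config (e n t : ℕ) : nextCodeOp (config e n t) = (true, config (e + 1) n t) := by
  simp [nextCodeOp, config]

theorem stepOp_config_of_eq_none {e n t : ℕ}
    (h : evaln t (Denumerable.ofNat Code e) n = none) :
    stepOp (config e n t) = (false, config e n (t + 1)) := by
  simp [stepOp, config, h]

theorem stepOp_config_of_eq_some {e n t v : ℕ}
    (h : evaln t (Denumerable.ofNat Code e) n = some v) : stepOp (config e n t) = (true, v) := by
  simp [stepOp, config, h]

theorem decodeResultOp_encodeResult (p : Bool × ℕ) : decodeResultOp (encodeResult p) = p := by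
  obtain ⟨_ | _, v⟩ := p <;> simp [decodeResultOp, encodeResult]

def universalFU : FU ℕ where
  carrier := {(0, initOp), (1, nextCodeOp), (2, stepOp), (3, decodeResultOp)}
  finite := (((Set.finite_singleton _).insert _).insert _).insert _
  functional := by
    intro m M M' h h'
    simp only [Set.mem_insert_iff, Set.mem_singleton_iff, Prod.mk.injEq] at h h'
    rcases h with ⟨rfl, rfl⟩ | ⟨rfl, rfl⟩ | ⟨rfl, rfl⟩ | ⟨rfl, rfl⟩ <;> simp_all

theorem mem_universalFU_carrier_zero : ((0 : ℕ), initOp) ∈ universalFU.carrier := by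
  simp [universalFU]

theorem mem_universalFU_carrier_one : ((1 : ℕ), nextCodeOp) ∈ universalFU.carrier := by
  simp [universalFU]

theorem mem_universalFU_carrier_two : ((2 : ℕ), stepOp) ∈ universalFU.carrier := by
  simp [universalFU]

theorem mem_universalFU_carrier_three : ((3 : ℕ), decodeResultOp) ∈ universalFU.carrier := by
  simp [universalFU]

theorem computableFU_universalFU : ComputableFU universalFU := by
  have hpair : Primrec₂ Nat.pair := Primrec₂.natPair
  have he : Primrec fun s : ℕ => s.unpair.1 := Primrec.fst.comp Primrec.unpair
  have hrest : Primrec fun s : ℕ => s.unpair.2 := Primrec.snd.comp Primrec.unpair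
  have hn : Primrec fun s : ℕ => s.unpair.2.unpair.1 := Primrec.fst.comp (Primrec.unpair.comp hrest)
  have ht : Primrec fun s : ℕ => s.unpair.2.unpair.2 := Primrec.snd.comp (Primrec.unpair.comp hrest)
  have hrun : Primrec fun s : ℕ =>
      evaln s.unpair.2.unpair.2 (Denumerable.ofNat Code s.unpair.1) s.unpair.2.unpair.1 :=
    primrec_evaln.comp (((ht.pair ((Primrec.ofNat Code).comp he))).pair hn)
  intro m M hM
  simp only [universalFU, Set.mem_insert_iff, Set.mem_singleton_iff, Prod.mk.injEq] at hM
  rcases hM with ⟨rfl, rfl⟩ | ⟨rfl, rfl⟩ | ⟨rfl, rfl⟩ | ⟨rfl, rfl⟩ <;> apply ComputableMO.of_primrec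
  · exact (Primrec.const true).pair
      (hpair.comp (Primrec.const 0) (hpair.comp Primrec.id (Primrec.const 0)))
  · exact (Primrec.const true).pair (hpair.comp (Primrec.succ.comp he) hrest)
  · exact (Primrec.option_isSome.comp hrun).pair
      (Primrec.option_getD.comp hrun (hpair.comp he (hpair.comp hn (Primrec.succ.comp ht))))
  · exact (Primrec.eq.comp he (Primrec.const 0)).decide.pair hrest

theorem exists_code_eval_encodeResult {M : ℕ → Bool × ℕ} (hM : ComputableMO M) :
    ∃ c : Code, ∀ n, eval c n = Part.some (encodeResult (M n)) := by
  have hcomp : Computable fun n => encodeResult (M n) :=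
    (Primrec₂.natPair.comp (Primrec.cond Primrec.fst (Primrec.const 0) (Primrec.const 1))
      Primrec.snd).to_comp.comp (hM.1.pair hM.2)
  obtain ⟨c, hc⟩ := exists_code.1 (Partrec.nat_iff.1 hcomp.partrec)
  exact ⟨c, fun n => by rw [hc]; rfl⟩

theorem exists_evaln_eq_some_and_forall_lt_eq_none {c : Code} {n v : ℕ} (h : v ∈ eval c n) :
    ∃ k, evaln k c n = some v ∧ ∀ j < k, evaln j c n = none := by
  classical
  have hex : ∃ k, (evaln k c n).isSome := by
    obtain ⟨k, hk⟩ := evaln_complete.1 h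
    exact ⟨k, Option.isSome_iff_exists.2 ⟨v, hk⟩⟩
  obtain ⟨w, hw⟩ := Option.isSome_iff_exists.1 (Nat.find_spec hex)
  have hwv : w = v := Part.mem_unique (evaln_sound hw) h
  refine ⟨Nat.find hex, hwv ▸ hw, fun j hj => ?_⟩
  simpa using Nat.find_min hex hj

def simulator (e : ℕ) : List Instr :=
  .basic 0 :: (List.replicate e (.basic 1) ++ [.negtest 2, .bjump 1, .postest 3, .haltT, .haltF])

theorem simulator_getElem?_succ_of_lt {e j : ℕ} (hj : j < e) :
    (simulator e)[j + 1]? = some (.basic 1) := by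
  simp [simulator, List.getElem?_append_left (by simpa using hj : j < (List.replicate e _).length), hj]

theorem simulator_getElem?_add_succ (e r : ℕ) : (simulator e)[e + 1 + r]? =
    [Instr.negtest 2, .bjump 1, .postest 3, .haltT, .haltF][r]? := by
  rw [show e + 1 + r = (e + r) + 1 by omega, simulator, List.getElem?_cons_succ,
    List.getElem?_append_right (by simp)]
  simp

theorem instrSeqOver_simulator (e : ℕ) : InstrSeqOver universalFU.iface (simulator e) := by
  refine ⟨List.cons_ne_nil _ _, fun u hu => ?_⟩
  simp only [simulator, List.mem_cons, List.mem_append, List.mem_replicate,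
    List.not_mem_nil, or_false] at hu
  rcases hu with rfl | ⟨_, rfl⟩ | rfl | rfl | rfl | rfl | rfl
  · exact ⟨_, mem_universalFU_carrier_zero⟩
  · exact ⟨_, mem_universalFU_carrier_one⟩
  · exact ⟨_, mem_universalFU_carrier_two⟩
  · trivial
  · exact ⟨_, mem_universalFU_carrier_three⟩
  · trivial
  · trivial

theorem exec_simulator {M : ℕ → Bool × ℕ} {e : ℕ}
    (he : ∀ n, eval (Denumerable.ofNat Code e) n = Part.some (encodeResult (M n))) (n : ℕ) :
    Exec universalFU (simulator e) 0 n (M n).1 (M n).2 := by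
  have hop0 := FU.op_eq_of_mem mem_universalFU_carrier_zero
  have hop1 := FU.op_eq_of_mem mem_universalFU_carrier_one
  have hop2 := FU.op_eq_of_mem mem_universalFU_carrier_two
  have hop3 := FU.op_eq_of_mem mem_universalFU_carrier_three
  obtain ⟨k, hk, hnone⟩ :=
    exists_evaln_eq_some_and_forall_lt_eq_none (he n ▸ Part.mem_some (encodeResult (M n)))
  have hdecode : Exec universalFU (simulator e) (e + 1 + 2) (encodeResult (M n)) (M n).1 (M n).2 := by
    have := Exec.of_postest_halt (H := universalFU) (s := encodeResult (M n))
      (simulator_getElem?_add_succ e 2) (simulator_getElem?_add_succ e 3)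
      (simulator_getElem?_add_succ e 4)
    rwa [hop3, decodeResultOp_encodeResult] at this
  have hloop : Exec universalFU (simulator e) (e + 1) (config e n 0) (M n).1 (M n).2 := by
    refine Exec.of_negtest_loop (states := config e n) (k := k) ?_ ?_
      (fun j hj => by rw [hop2, stepOp_config_of_eq_none (hnone j hj)])
      (by rw [hop2, stepOp_config_of_eq_some hk]) (by rw [hop2, stepOp_config_of_eq_some hk]; exact hdecode)
    · exact simulator_getElem?_add_succ e 0
    · exact simulator_getElem?_add_succ e 1
  have hload : Exec universalFU (simulator e) 1 (config 0 n 0) (M n).1 (M n).2 :=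
    Exec.of_basic_run (states := fun j => config j n 0)
      (fun j hj => by simpa [Nat.add_comm] using simulator_getElem?_succ_of_lt hj)
      (fun j _ => by rw [hop1, nextCodeOp_config]) (by rwa [Nat.add_comm])
  exact .basic 0 rfl (by rw [hop0]; exact hload)

theorem derivedOp_universalFU {M : ℕ → Bool × ℕ} (hM : ComputableMO M) :
    DerivedOp universalFU M := by
  obtain ⟨c, hc⟩ := exists_code_eval_encodeResult hM
  exact ⟨simulator (Encodable.encode c), instrSeqOver_simulator _,
    exec_simulator (by simpa using hc)⟩

end Universal

open Universal in
/-- There exists a universal computable functional unit for ℕ. -/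
theorem exists_universal_computable_fu :
    ∃ H : FU ℕ, ComputableFU H ∧ ∀ L : FU ℕ, ComputableFU L → FU.le L H :=
  ⟨universalFU, computableFU_universalFU, fun _ hL m M hM => derivedOp_universalFU (hL m M hM)⟩
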